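/- arXiv:2207.03533 — 6 statements merged into one kernel-verified Lean document; each statement's English description precedes it below -/
import Mathlib

section
/- For A ∈ SL(4,ℂ), there exists a nonzero c ∈ ℂ with F∘A = c·F if and only if there exist a permutation σ of {0,1,2} and nonzero complex numbers λ₀,λ₁,λ₂,λ₃ with λ₀λ₁λ₂ = λ₃³ such that A·eⱼ = λⱼ·e_{σ(j)} for j = 0,1,2 and A·e₃ = λ₃·e₃. This describes the stabilizer Stab(S_{3A₂}) of the 3A₂ cubic surface inside SL(4,ℂ). -/
open MvPolynomial

/-- The defining cubic form of the 3A₂ cubic surface: F = x₀x₁x₂ + x₃³. -/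
noncomputable def F3A2 : MvPolynomial (Fin 4) ℂ :=
  X 0 * X 1 * X 2 + X 3 ^ 3

/-- The substitution action: (P∘A)(x) = P(A·x), i.e. xⱼ ↦ Σₖ Aⱼₖ·xₖ. -/
noncomputable def actM (A : Matrix (Fin 4) (Fin 4) ℂ) (P : MvPolynomial (Fin 4) ℂ) :
    MvPolynomial (Fin 4) ℂ :=
  MvPolynomial.aeval (fun j => ∑ k : Fin 4, MvPolynomial.C (A j k) * MvPolynomial.X k) P

/-- Standard basis vectors of ℂ⁴. -/
noncomputable def stdBasis (i : Fin 4) : Fin 4 → ℂ := Pi.single i 1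

/- Auxiliary: cubic function and its polarization. -/
noncomputable def g3 (p : Fin 4 → ℂ) : ℂ := p 0 * p 1 * p 2 + p 3 ^ 3

noncomputable def S3 (u v w : Fin 4 → ℂ) : ℂ :=
  u 0*v 1*w 2 + u 0*v 2*w 1 + u 1*v 0*w 2 + u 1*v 2*w 0 + u 2*v 0*w 1 + u 2*v 1*w 0
  + 6 * (u 3 * v 3 * w 3)

lemma cs0 : Fin.castSucc (0:Fin 3) = (0:Fin 4) := by decide
lemma cs1 : Fin.castSucc (1:Fin 3) = (1:Fin 4) := by decide
lemma cs2 : Fin.castSucc (2:Fin 3) = (2:Fin 4) := by decide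

lemma eval_F3A2 (p : Fin 4 → ℂ) : eval p F3A2 = g3 p := by simp [F3A2, g3]

lemma eval_actM (B : Matrix (Fin 4) (Fin 4) ℂ) (p : Fin 4 → ℂ) :
    eval p (actM B F3A2) = g3 (B.mulVec p) := by
  simp [actM, F3A2, g3, Matrix.mulVec, dotProduct, eval_sum, mul_comm]

lemma key_iff (B : Matrix (Fin 4) (Fin 4) ℂ) (c : ℂ) :
    actM B F3A2 = c • F3A2 ↔ ∀ p, g3 (B.mulVec p) = c * g3 p := by
  constructor
  · intro he p
    have := congrArg (eval p) he
    rwa [eval_actM, smul_eval, eval_F3A2] at this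
  · intro hf
    apply MvPolynomial.funext
    intro x
    rw [eval_actM, smul_eval, eval_F3A2, hf]

lemma S3_eq (u v w : Fin 4 → ℂ) :
    S3 u v w = g3 (u+v+w) - g3 (u+v) - g3 (u+w) - g3 (v+w) + g3 u + g3 v + g3 w := by
  simp only [g3, S3, Pi.add_apply]; ring

lemma S3_equiv (B : Matrix (Fin 4) (Fin 4) ℂ) (c : ℂ)
    (h : ∀ p, g3 (B.mulVec p) = c * g3 p) (u v w : Fin 4 → ℂ) :
    S3 (B.mulVec u) (B.mulVec v) (B.mulVec w) = c * S3 u v w := by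
  rw [S3_eq, S3_eq, ← Matrix.mulVec_add, ← Matrix.mulVec_add, ← Matrix.mulVec_add,
    ← Matrix.mulVec_add, h, h, h, h, h, h, h]
  ring

lemma S3_smul₁ (a : ℂ) (u v w : Fin 4 → ℂ) : S3 (a • u) v w = a * S3 u v w := by
  simp only [S3, Pi.smul_apply, smul_eq_mul]; ring
lemma S3_smul₂ (a : ℂ) (u v w : Fin 4 → ℂ) : S3 u (a • v) w = a * S3 u v w := by
  simp only [S3, Pi.smul_apply, smul_eq_mul]; ring
lemma S3_smul₃ (a : ℂ) (u v w : Fin 4 → ℂ) : S3 u v (a • w) = a * S3 u v w := by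
  simp only [S3, Pi.smul_apply, smul_eq_mul]; ring

lemma S3_diag_basis (j : Fin 3) (w : Fin 4 → ℂ) :
    S3 (stdBasis (Fin.castSucc j)) (stdBasis (Fin.castSucc j)) w = 0 := by
  fin_cases j <;> simp [S3, stdBasis, Pi.single_apply, cs0, cs1, cs2]

lemma S3_pair_last (j k : Fin 3) :
    S3 (stdBasis (Fin.castSucc j)) (stdBasis (Fin.castSucc k)) (stdBasis 3) = 0 := by
  fin_cases j <;> fin_cases k <;> simp [S3, stdBasis, Pi.single_apply, cs0, cs1, cs2]

lemma S3_triple_basis (a b c : Fin 3) (hab : a ≠ b) (hac : a ≠ c) (hbc : b ≠ c) :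
    S3 (stdBasis (Fin.castSucc a)) (stdBasis (Fin.castSucc b)) (stdBasis (Fin.castSucc c)) = 1 := by
  fin_cases a <;> fin_cases b <;> fin_cases c <;>
    simp_all [S3, stdBasis, Pi.single_apply, cs0, cs1, cs2]

lemma forward_dir (A : Matrix.SpecialLinearGroup (Fin 4) ℂ) (c : ℂ) (hc : c ≠ 0)
    (h : ∀ p, g3 ((A : Matrix (Fin 4) (Fin 4) ℂ).mulVec p) = c * g3 p) :
    (∃ (σ : Equiv.Perm (Fin 3)) (lam : Fin 4 → ℂ),
      (∀ i, lam i ≠ 0) ∧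
      lam 0 * lam 1 * lam 2 = lam 3 ^ 3 ∧
      (∀ j : Fin 3, (A : Matrix (Fin 4) (Fin 4) ℂ).mulVec (stdBasis (Fin.castSucc j)) =
        lam (Fin.castSucc j) • stdBasis (Fin.castSucc (σ j))) ∧
      (A : Matrix (Fin 4) (Fin 4) ℂ).mulVec (stdBasis 3) = lam 3 • stdBasis 3) := by
  set B := (A : Matrix (Fin 4) (Fin 4) ℂ) with hB
  have hmul : ((A⁻¹ : Matrix.SpecialLinearGroup (Fin 4) ℂ) : Matrix (Fin 4) (Fin 4) ℂ) * B = 1 := by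
    rw [hB, ← Matrix.SpecialLinearGroup.coe_mul, inv_mul_cancel,
      Matrix.SpecialLinearGroup.coe_one]
  have hmul' : B * ((A⁻¹ : Matrix.SpecialLinearGroup (Fin 4) ℂ) : Matrix (Fin 4) (Fin 4) ℂ) = 1 := by
    rw [hB, ← Matrix.SpecialLinearGroup.coe_mul, mul_inv_cancel,
      Matrix.SpecialLinearGroup.coe_one]
  have hinj : Function.Injective (B.mulVec) := by
    intro u v huv
    have h2 := congrArg (Matrix.mulVec (((A⁻¹ : Matrix.SpecialLinearGroup (Fin 4) ℂ)) :
      Matrix (Fin 4) (Fin 4) ℂ)) huv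
    rwa [Matrix.mulVec_mulVec, Matrix.mulVec_mulVec, hmul, Matrix.one_mulVec,
      Matrix.one_mulVec] at h2
  have hsur : ∀ v, ∃ w, B.mulVec w = v := fun v =>
    ⟨((A⁻¹ : Matrix.SpecialLinearGroup (Fin 4) ℂ) : Matrix (Fin 4) (Fin 4) ℂ).mulVec v,
      by rw [Matrix.mulVec_mulVec, hmul', Matrix.one_mulVec]⟩
  -- structure of the first three columns
  have hcolstruct : ∀ j : Fin 3, ∃ (i : Fin 3) (l : ℂ), l ≠ 0 ∧
      B.mulVec (stdBasis (Fin.castSucc j)) = l • stdBasis (Fin.castSucc i) := by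
    intro j
    set q := B.mulVec (stdBasis (Fin.castSucc j)) with hqdef
    have hScol : ∀ v, S3 q q v = 0 := by
      intro v
      obtain ⟨w, rfl⟩ := hsur v
      rw [hqdef, S3_equiv B c h, S3_diag_basis, mul_zero]
    have e0 := hScol (stdBasis 0)
    have e1 := hScol (stdBasis 1)
    have e2 := hScol (stdBasis 2)
    have e3 := hScol (stdBasis 3)
    simp [S3, stdBasis, Pi.single_apply] at e0 e1 e2 e3
    have h12 : q 1 * q 2 = 0 := by linear_combination e0 / 2
    have h02 : q 0 * q 2 = 0 := by linear_combination e1 / 2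
    have h01 : q 0 * q 1 = 0 := by linear_combination e2 / 2
    have h3 : q 3 = 0 := e3
    have hqne : q ≠ 0 := by
      intro h0
      have hz : stdBasis (Fin.castSucc j) = 0 := hinj (by rw [← hqdef, h0, Matrix.mulVec_zero])
      have := congrFun hz (Fin.castSucc j)
      simp [stdBasis] at this
    by_cases hq0 : q 0 = 0
    · by_cases hq1 : q 1 = 0
      · by_cases hq2 : q 2 = 0
        · exact absurd (_root_.funext fun x => by fin_cases x <;> simp [hq0, hq1, hq2, h3]) hqne
        · refine ⟨2, q 2, hq2, _root_.funext fun x => ?_⟩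
          fin_cases x <;> simp [stdBasis, Pi.single_apply, cs2, hq0, hq1, h3]
      · have hq2 : q 2 = 0 := by
          rcases mul_eq_zero.mp h12 with h' | h'
          · exact absurd h' hq1
          · exact h'
        refine ⟨1, q 1, hq1, _root_.funext fun x => ?_⟩
        fin_cases x <;> simp [stdBasis, Pi.single_apply, cs1, hq0, hq2, h3]
    · have hq1 : q 1 = 0 := by
        rcases mul_eq_zero.mp h01 with h' | h'
        · exact absurd h' hq0
        · exact h'
      have hq2 : q 2 = 0 := by
        rcases mul_eq_zero.mp h02 with h' | h'
        · exact absurd h' hq0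
        · exact h'
      refine ⟨0, q 0, hq0, _root_.funext fun x => ?_⟩
      fin_cases x <;> simp [stdBasis, Pi.single_apply, cs0, hq1, hq2, h3]
  choose τ l hl hcol using hcolstruct
  have hτinj : Function.Injective τ := by
    intro j k hjk
    by_contra hne
    have h1 : B.mulVec (l k • stdBasis (Fin.castSucc j)) =
        B.mulVec (l j • stdBasis (Fin.castSucc k)) := by
      rw [Matrix.mulVec_smul, Matrix.mulVec_smul, hcol j, hcol k, hjk, smul_comm]
    have h2 := hinj h1
    have h3 := congrFun h2 (Fin.castSucc j)
    simp [stdBasis, Pi.single_apply, Fin.castSucc_inj, hne] at h3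
    exact hl k h3
  have hτbij : Function.Bijective τ := Finite.injective_iff_bijective.mp hτinj
  let σ : Equiv.Perm (Fin 3) := Equiv.ofBijective τ hτbij
  have hσ : ∀ j, σ j = τ j := fun j => rfl
  set q3 := B.mulVec (stdBasis 3) with hq3def
  have hpair : ∀ a b : Fin 3, a ≠ b → S3 (stdBasis (Fin.castSucc a)) (stdBasis (Fin.castSucc b)) q3 = 0 := by
    intro a b hab
    obtain ⟨j, rfl⟩ := hτbij.surjective a
    obtain ⟨k, rfl⟩ := hτbij.surjective b
    have e := S3_equiv B c h (stdBasis (Fin.castSucc j)) (stdBasis (Fin.castSucc k)) (stdBasis 3)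
    rw [S3_pair_last, mul_zero, hcol j, hcol k, ← hq3def, S3_smul₁, S3_smul₂] at e
    rcases mul_eq_zero.mp e with h' | h'
    · exact absurd h' (hl j)
    rcases mul_eq_zero.mp h' with h'' | h''
    · exact absurd h'' (hl k)
    · exact h''
  have hz0 : q3 0 = 0 := by
    have := hpair 1 2 (by decide)
    simpa [S3, stdBasis, Pi.single_apply, cs0, cs1, cs2] using this
  have hz1 : q3 1 = 0 := by
    have := hpair 0 2 (by decide)
    simpa [S3, stdBasis, Pi.single_apply, cs0, cs1, cs2] using this
  have hz2 : q3 2 = 0 := by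
    have := hpair 0 1 (by decide)
    simpa [S3, stdBasis, Pi.single_apply, cs0, cs1, cs2] using this
  have hcq : g3 q3 = c := by
    have := h (stdBasis 3)
    rw [← hq3def] at this
    simpa [g3, stdBasis, Pi.single_apply] using this
  have hd3 : q3 3 ^ 3 = c := by
    rw [← hcq]; simp [g3, hz0, hz1, hz2]
  have hd : q3 3 ≠ 0 := by
    intro h0
    exact hc (by rw [← hd3, h0]; ring)
  have hprod : l 0 * l 1 * l 2 = c := by
    have e := S3_equiv B c h (stdBasis (Fin.castSucc (0:Fin 3)))
      (stdBasis (Fin.castSucc (1:Fin 3))) (stdBasis (Fin.castSucc (2:Fin 3)))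
    rw [hcol 0, hcol 1, hcol 2, S3_smul₁, S3_smul₂, S3_smul₃,
      S3_triple_basis _ _ _ (fun hh => by simpa using hτinj hh)
        (fun hh => by simpa using hτinj hh) (fun hh => by simpa using hτinj hh),
      S3_triple_basis 0 1 2 (by decide) (by decide) (by decide)] at e
    linear_combination e
  refine ⟨σ, ![l 0, l 1, l 2, q3 3], ?_, ?_, ?_, ?_⟩
  · intro i
    fin_cases i
    · exact hl 0
    · exact hl 1
    · exact hl 2
    · exact hd
  · show l 0 * l 1 * l 2 = q3 3 ^ 3
    rw [hprod, hd3]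
  · intro j
    rw [hcol j, hσ]
    congr 1
    fin_cases j <;> rfl
  · show q3 = q3 3 • stdBasis 3
    funext x
    fin_cases x <;> simp [stdBasis, Pi.single_apply, hz0, hz1, hz2]

/-- The stabilizer of the 3A₂ cubic in SL(4,ℂ): a matrix A ∈ SL(4,ℂ) satisfies
`F∘A = c·F` for some nonzero `c` if and only if it is a generalized permutation
matrix on the first three coordinates with entries `λ₀,λ₁,λ₂`, scaling the last
coordinate by `λ₃`, subject to `λ₀λ₁λ₂ = λ₃³`. -/
theorem SL_stabilizer_of_3A2_cubic (A : Matrix.SpecialLinearGroup (Fin 4) ℂ) :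
    (∃ c : ℂ, c ≠ 0 ∧ actM (A : Matrix (Fin 4) (Fin 4) ℂ) F3A2 = c • F3A2) ↔
    (∃ (σ : Equiv.Perm (Fin 3)) (lam : Fin 4 → ℂ),
      (∀ i, lam i ≠ 0) ∧
      lam 0 * lam 1 * lam 2 = lam 3 ^ 3 ∧
      (∀ j : Fin 3, (A : Matrix (Fin 4) (Fin 4) ℂ).mulVec (stdBasis (Fin.castSucc j)) =
        lam (Fin.castSucc j) • stdBasis (Fin.castSucc (σ j))) ∧
      (A : Matrix (Fin 4) (Fin 4) ℂ).mulVec (stdBasis 3) = lam 3 • stdBasis 3) := by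
  constructor
  · rintro ⟨c, hc, he⟩
    exact forward_dir A c hc ((key_iff _ c).mp he)
  · rintro ⟨σ, lam, hlam, hrel, hcols, hcol3⟩
    refine ⟨lam 3 ^ 3, pow_ne_zero _ (hlam 3), (key_iff _ _).mpr ?_⟩
    intro p
    set B := (A : Matrix (Fin 4) (Fin 4) ℂ) with hB
    have hp : p = p 0 • stdBasis 0 + p 1 • stdBasis 1 + p 2 • stdBasis 2 + p 3 • stdBasis 3 := by
      funext x
      fin_cases x <;> simp [stdBasis, Pi.single_apply]
    have hst0 : stdBasis 0 = stdBasis (Fin.castSucc (0:Fin 3)) := by rw [cs0]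
    have hst1 : stdBasis 1 = stdBasis (Fin.castSucc (1:Fin 3)) := by rw [cs1]
    have hst2 : stdBasis 2 = stdBasis (Fin.castSucc (2:Fin 3)) := by rw [cs2]
    have hq : B.mulVec p =
        (p 0 * lam 0) • stdBasis (Fin.castSucc (σ 0)) +
        (p 1 * lam 1) • stdBasis (Fin.castSucc (σ 1)) +
        (p 2 * lam 2) • stdBasis (Fin.castSucc (σ 2)) +
        (p 3 * lam 3) • stdBasis 3 := by
      conv_lhs => rw [hp]
      rw [Matrix.mulVec_add, Matrix.mulVec_add, Matrix.mulVec_add,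
        Matrix.mulVec_smul, Matrix.mulVec_smul, Matrix.mulVec_smul, Matrix.mulVec_smul,
        hst0, hst1, hst2, hcols 0, hcols 1, hcols 2, hcol3,
        smul_smul, smul_smul, smul_smul, smul_smul, cs0, cs1, cs2]
    set Q := B.mulVec p with hQ
    have hQv : ∀ j : Fin 3, Q (Fin.castSucc (σ j)) = lam (Fin.castSucc j) * p (Fin.castSucc j) := by
      intro j
      have h01 : σ 0 ≠ σ 1 := fun hh => by simpa using σ.injective hh
      have h02 : σ 0 ≠ σ 2 := fun hh => by simpa using σ.injective hh
      have h12 : σ 1 ≠ σ 2 := fun hh => by simpa using σ.injective hh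
      have hne3 : ∀ m : Fin 3, Fin.castSucc m ≠ (3:Fin 4) := by decide
      fin_cases j <;>
        simp [hq, stdBasis, Pi.single_apply, Fin.castSucc_inj, h01, h02, h12, h01.symm,
          h02.symm, h12.symm, hne3, cs0, cs1, cs2] <;> ring
    have hQ3 : Q 3 = lam 3 * p 3 := by
      have hne3 : ∀ m : Fin 3, (3:Fin 4) ≠ Fin.castSucc m := by decide
      simp [hq, stdBasis, Pi.single_apply, hne3]
      ring
    have hgoal : g3 Q = (lam 0 * lam 1 * lam 2) * (p 0 * p 1 * p 2) + (lam 3 * p 3) ^ 3 := by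
      have hprod3 : Q 0 * Q 1 * Q 2 = (lam 0 * lam 1 * lam 2) * (p 0 * p 1 * p 2) := by
        have hcomp : ∀ f : Fin 3 → ℂ, (∏ i : Fin 3, f (σ i)) = ∏ i : Fin 3, f i :=
          fun f => Equiv.prod_comp σ f
        have h1 : Q 0 * Q 1 * Q 2 = ∏ i : Fin 3, Q (Fin.castSucc i) := by
          rw [Fin.prod_univ_three, cs0, cs1, cs2]
        rw [h1, ← hcomp (fun i => Q (Fin.castSucc i))]
        simp only [hQv]
        rw [Fin.prod_univ_three, cs0, cs1, cs2]
        ring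
      rw [g3, hprod3, hQ3]
    rw [hgoal, hrel, g3]
    ring
end

section
/- For every permutation σ of {0,1,2} there exist A ∈ SL(4,ℂ) and a nonzero c ∈ ℂ with F∘A = c·F such that A·eⱼ is a nonzero scalar multiple of e_{σ(j)} for j = 0,1,2 and A·e₃ is a nonzero scalar multiple of e₃. (This is the surjectivity of the homomorphism Stab(S_{3A₂}) → S₃ in the exact sequence 1 → D' → Stab(S_{3A₂}) → S₃ → 1.) -/
open MvPolynomial

/-! The permutation matrix of σ, extended to fix e₃, permutes x₀, x₁, x₂ and so preserves F,
while a scalar matrix ζ multiplies the cubic F by ζ³. The permutation matrix has determinant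
sign σ, so ζ times it lies in SL(4,ℂ) once ζ⁴ = sign σ. -/

namespace MvPolynomial

theorem IsHomogeneous.aeval_smul {R S σ : Type*} [CommSemiring R] [CommSemiring S] [Algebra R S]
    {φ : MvPolynomial σ R} {n : ℕ} (hφ : φ.IsHomogeneous n) (c : S) (g : σ → S) :
    MvPolynomial.aeval (c • g) φ = c ^ n * MvPolynomial.aeval g φ := by
  conv_lhs => rw [φ.as_sum]
  conv_rhs => rw [φ.as_sum]
  simp only [map_sum, Finset.mul_sum, aeval_monomial]
  refine Finset.sum_congr rfl fun d hd => ?_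
  have hdeg : d.degree = n := by
    rw [Finsupp.degree_eq_weight_one]; exact hφ (mem_support_iff.mp hd)
  simp only [Pi.smul_apply, smul_eq_mul, mul_pow, Finsupp.prod_mul]
  rw [Finsupp.prod, Finset.prod_pow_eq_pow_sum, ← Finsupp.degree_apply, hdeg]
  ring

end MvPolynomial

theorem actM_smul (ζ : ℂ) (M : Matrix (Fin 4) (Fin 4) ℂ) {P : MvPolynomial (Fin 4) ℂ} {n : ℕ}
    (hP : P.IsHomogeneous n) : actM (ζ • M) P = ζ ^ n • actM M P := by
  have hsubst : (fun j => ∑ k : Fin 4, C ((ζ • M) j k) * X k) =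
      (C ζ : MvPolynomial (Fin 4) ℂ) • fun j => ∑ k : Fin 4, C (M j k) * X k := by
    ext1 j; simp [Finset.mul_sum, mul_assoc]
  rw [actM, hsubst, hP.aeval_smul, actM, ← map_pow, ← smul_eq_C_mul]

theorem actM_permMatrix (τ : Equiv.Perm (Fin 4)) (P : MvPolynomial (Fin 4) ℂ) :
    actM (τ.permMatrix ℂ) P = rename τ P := by
  have hsubst : (fun j => ∑ k : Fin 4, C (τ.permMatrix ℂ j k) * X k) = X ∘ τ := by
    ext1 j; simp [PEquiv.toMatrix_apply]
  rw [actM, hsubst, rename_eq_aeval]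

theorem isHomogeneous_F3A2 : F3A2.IsHomogeneous 3 :=
  (((isHomogeneous_X ℂ 0).mul (isHomogeneous_X ℂ 1)).mul (isHomogeneous_X ℂ 2)).add
    ((isHomogeneous_X ℂ 3).pow 3)

theorem rename_viaFintypeEmbedding_F3A2 (σ : Equiv.Perm (Fin 3)) :
    rename (σ.viaFintypeEmbedding Fin.castSuccEmb) F3A2 = F3A2 := by
  have hprod :
      (X 0 * X 1 * X 2 : MvPolynomial (Fin 4) ℂ) = ∏ j : Fin 3, X (Fin.castSucc j) := by
    simp [Fin.prod_univ_three]
  have h3 : σ.viaFintypeEmbedding Fin.castSuccEmb 3 = 3 :=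
    σ.viaFintypeEmbedding_apply_notMem_range _ (by simp)
  rw [F3A2, map_add, map_pow, rename_X, h3, hprod, map_prod]
  simp only [rename_X]
  congr 1
  exact Equiv.prod_comp σ (fun j => (X (Fin.castSucc j) : MvPolynomial (Fin 4) ℂ))

theorem Matrix.permMatrix_mulVec_single {n R : Type*} [DecidableEq n] [Fintype n] [CommRing R]
    (τ : Equiv.Perm n) (j : n) :
    (τ.permMatrix R).mulVec (Pi.single j 1) = Pi.single (τ⁻¹ j) 1 := by
  rw [Matrix.permMatrix_mulVec]
  ext i
  simp [Pi.single_apply, Equiv.eq_symm_apply]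

theorem Matrix.exists_ne_zero_det_smul_permMatrix_eq_one {n K : Type*} [DecidableEq n]
    [Fintype n] [Nonempty n] [Field K] [IsAlgClosed K] (τ : Equiv.Perm n) :
    ∃ ζ : K, ζ ≠ 0 ∧ (ζ • τ.permMatrix K).det = 1 := by
  obtain ⟨ζ, hζ⟩ := IsAlgClosed.exists_pow_nat_eq (Equiv.Perm.sign τ : K)
    (Fintype.card_pos (α := n))
  refine ⟨ζ, ne_zero_pow (n := Fintype.card n) Fintype.card_ne_zero ?_, ?_⟩
  · rcases Int.units_eq_one_or (Equiv.Perm.sign τ) with h | h <;> simp [hζ, h]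
  · rw [Matrix.det_smul, Matrix.det_permutation, hζ, ← Int.cast_mul, ← Units.val_mul,
      Int.units_mul_self, Units.val_one, Int.cast_one]

/-- Surjectivity of Stab(S_{3A₂}) → S₃: for every permutation σ of {0,1,2} there is
A ∈ SL(4,ℂ) with F∘A = c·F (c ≠ 0) sending each eⱼ (j < 3) to a nonzero multiple of
e_{σ(j)} and e₃ to a nonzero multiple of e₃. -/
theorem SL_stabilizer_surjects_onto_S3 (σ : Equiv.Perm (Fin 3)) :
    ∃ A : Matrix.SpecialLinearGroup (Fin 4) ℂ, ∃ c : ℂ, c ≠ 0 ∧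
      actM (A : Matrix (Fin 4) (Fin 4) ℂ) F3A2 = c • F3A2 ∧
      (∀ j : Fin 3, ∃ μ : ℂ, μ ≠ 0 ∧
        (A : Matrix (Fin 4) (Fin 4) ℂ).mulVec (stdBasis (Fin.castSucc j)) =
          μ • stdBasis (Fin.castSucc (σ j))) ∧
      (∃ μ : ℂ, μ ≠ 0 ∧
        (A : Matrix (Fin 4) (Fin 4) ℂ).mulVec (stdBasis 3) = μ • stdBasis 3) := by
  set τ : Equiv.Perm (Fin 4) := σ⁻¹.viaFintypeEmbedding Fin.castSuccEmb
  obtain ⟨ζ, hζ0, hdet⟩ := Matrix.exists_ne_zero_det_smul_permMatrix_eq_one (K := ℂ) τ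
  have hτ_castSucc (j : Fin 3) : τ⁻¹ (Fin.castSucc j) = Fin.castSucc (σ j) := by
    rw [Equiv.Perm.inv_eq_iff_eq]
    simpa using (σ⁻¹.viaFintypeEmbedding_apply_image Fin.castSuccEmb (σ j)).symm
  have hτ_three : τ⁻¹ 3 = 3 := by
    rw [Equiv.Perm.inv_eq_iff_eq]
    exact (σ⁻¹.viaFintypeEmbedding_apply_notMem_range _ (by simp)).symm
  refine ⟨⟨ζ • τ.permMatrix ℂ, hdet⟩, ζ ^ 3, pow_ne_zero 3 hζ0, ?_,
    fun j => ⟨ζ, hζ0, ?_⟩, ζ, hζ0, ?_⟩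
  · rw [actM_smul ζ _ isHomogeneous_F3A2, actM_permMatrix, rename_viaFintypeEmbedding_F3A2]
  · rw [Matrix.smul_mulVec, stdBasis, Matrix.permMatrix_mulVec_single, hτ_castSucc, stdBasis]
  · rw [Matrix.smul_mulVec, stdBasis, Matrix.permMatrix_mulVec_single, hτ_three]
end

section
/- Let V be the 20-dimensional ℂ-vector space of homogeneous degree-3 polynomials in x₀,x₁,x₂,x₃. Let S ⊆ V be the span of the 16 polynomials xᵢ·∂F/∂xⱼ for i,j ∈ {0,1,2,3}, and let W ⊆ V be the span of the six monomials x₀³, x₁³, x₂³, x₀²x₃, x₁²x₃, x₂²x₃. Then V is the internal direct sum S ⊕ W; in particular S has dimension 14 (the only linear relations among the 16 polynomials xᵢ·∂F/∂xⱼ are x₀·∂F/∂x₀ = x₁·∂F/∂x₁ = x₂·∂F/∂x₂) and W is a 6-dimensional complement, the Luna slice normal to the orbit of the 3A₂ cubic. -/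
open MvPolynomial

/-- The span of the 16 polynomials xᵢ·∂F/∂xⱼ, the tangent space to the orbit of the
3A₂ cubic. -/
noncomputable def orbitTangent : Submodule ℂ (MvPolynomial (Fin 4) ℂ) :=
  Submodule.span ℂ {P | ∃ i j : Fin 4, P = X i * MvPolynomial.pderiv j F3A2}

/-- The span of the six monomials x₀³, x₁³, x₂³, x₀²x₃, x₁²x₃, x₂²x₃: the Luna slice
normal to the orbit of the 3A₂ cubic. -/
noncomputable def lunaSlice : Submodule ℂ (MvPolynomial (Fin 4) ℂ) :=
  Submodule.span ℂ
    ({X 0 ^ 3, X 1 ^ 3, X 2 ^ 3, X 0 ^ 2 * X 3, X 1 ^ 2 * X 3, X 2 ^ 2 * X 3} :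
      Set (MvPolynomial (Fin 4) ℂ))

/-!
The partial derivatives of F are monomials up to nonzero scalars, so every xᵢ·∂F/∂xⱼ is a
nonzero multiple of a cubic monomial and S is the span of the 14 distinct monomials that occur.
The remaining 6 of the 20 cubic monomials are exactly those spanning W, and the monomial basis
of the cubic forms splits accordingly; the bookkeeping on exponent vectors is a finite check.
-/

open Finset

namespace MvPolynomial

section restrictSupport

variable {σ R : Type*} [CommSemiring R]

theorem restrictSupport_union (s t : Set (σ →₀ ℕ)) :
    restrictSupport R (s ∪ t) = restrictSupport R s ⊔ restrictSupport R t := by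
  simp only [restrictSupport_eq_span, Set.image_union, Submodule.span_union]

theorem disjoint_restrictSupport {s t : Set (σ →₀ ℕ)} (h : Disjoint s t) :
    Disjoint (restrictSupport R s) (restrictSupport R t) := by
  refine Submodule.disjoint_def.mpr fun p hs ht => ?_
  rw [mem_restrictSupport_iff] at hs ht
  exact support_eq_empty.mp (coe_eq_empty.mp (Set.subset_empty_iff.mp
    (h.inter_eq ▸ Set.subset_inter hs ht)))

theorem finrank_restrictSupport [StrongRankCondition R] (s : Set (σ →₀ ℕ)) :
    Module.finrank R (restrictSupport R s) = Nat.card s :=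
  Module.finrank_eq_nat_card_basis (basisRestrictSupport R s)

theorem span_range_monomial_eq_restrictSupport {ι : Type*} (e : ι → σ →₀ ℕ) (c : ι → R)
    (hc : ∀ i, IsUnit (c i)) :
    Submodule.span R (Set.range fun i => monomial (e i) (c i)) =
      restrictSupport R (Set.range e) := by
  apply le_antisymm
  · rw [Submodule.span_le]
    rintro _ ⟨i, rfl⟩
    exact (monomial_mem_restrictSupport R).mpr (Or.inl ⟨i, rfl⟩)
  · rw [restrictSupport_eq_span, Submodule.span_le]
    rintro _ ⟨_, ⟨i, rfl⟩, rfl⟩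
    have h_one : monomial (e i) (1 : R) = (hc i).unit⁻¹ • monomial (e i) (c i) := by
      rw [Units.smul_def, smul_monomial, smul_eq_mul, IsUnit.val_inv_mul]
    simp only [SetLike.mem_coe, h_one]
    exact Submodule.smul_mem _ _ (Submodule.subset_span ⟨i, rfl⟩)

end restrictSupport

section monomialSpan

variable {σ : Type*} [Fintype σ] (R : Type*) [CommSemiring R]

/-- Exponent vectors are taken as functions `σ → ℕ` rather than finsupps so that finite sets of
them are amenable to `decide`. -/
noncomputable def monomialSpan (A : Finset (σ → ℕ)) : Submodule R (MvPolynomial σ R) :=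
  restrictSupport R (Finsupp.equivFunOnFinite ⁻¹' A)

theorem monomial_equivFunOnFinite_symm (v : σ → ℕ) (r : R) :
    monomial (Finsupp.equivFunOnFinite.symm v) r = C r * ∏ i, X i ^ v i := by
  rw [monomial_eq, Finsupp.prod_fintype _ _ fun _ => pow_zero _]
  rfl

theorem monomialSpan_eq_span (A : Finset (σ → ℕ)) :
    monomialSpan R A =
      Submodule.span R ((fun v => monomial (Finsupp.equivFunOnFinite.symm v) 1) '' A) := by
  rw [monomialSpan, restrictSupport_eq_span, ← Equiv.image_symm_eq_preimage, Set.image_image]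

variable {R} in
theorem span_range_monomial_eq_monomialSpan {ι : Type*} [Fintype ι] (f : ι → σ → ℕ)
    (c : ι → R) (hc : ∀ i, IsUnit (c i)) :
    Submodule.span R (Set.range fun i => monomial (Finsupp.equivFunOnFinite.symm (f i)) (c i)) =
      monomialSpan R (univ.image f) := by
  rw [span_range_monomial_eq_restrictSupport _ c hc, monomialSpan]
  congr 1
  ext d
  simp [Equiv.eq_symm_apply, eq_comm]

theorem monomialSpan_union (A B : Finset (σ → ℕ)) :
    monomialSpan R (A ∪ B) = monomialSpan R A ⊔ monomialSpan R B := by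
  rw [monomialSpan, coe_union, Set.preimage_union, restrictSupport_union]
  rfl

variable {R} in
theorem disjoint_monomialSpan {A B : Finset (σ → ℕ)} (h : Disjoint A B) :
    Disjoint (monomialSpan R A) (monomialSpan R B) :=
  disjoint_restrictSupport ((disjoint_coe.mpr h).preimage _)

theorem finrank_monomialSpan [StrongRankCondition R] (A : Finset (σ → ℕ)) :
    Module.finrank R (monomialSpan R A) = #A := by
  rw [monomialSpan, finrank_restrictSupport,
    Nat.card_preimage_of_injective Finsupp.equivFunOnFinite.injective (by simp)]
  exact Nat.card_eq_finsetCard A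

theorem homogeneousSubmodule_eq_monomialSpan (k n : ℕ) :
    homogeneousSubmodule (Fin k) R n = monomialSpan R (Nat.antidiagonalTuple k n) := by
  rw [homogeneousSubmodule_eq_finsupp_supported, monomialSpan]
  congr 1
  ext d
  simp [Finsupp.degree_eq_sum, Nat.mem_antidiagonalTuple]

end monomialSpan

end MvPolynomial

def gradExponent : Fin 4 → Fin 4 → ℕ :=
  ![![0, 1, 1, 0], ![1, 0, 1, 0], ![1, 1, 0, 0], ![0, 0, 0, 2]]

def gradCoeff : Fin 4 → ℂ := ![1, 1, 1, 3]

def tangentExponents : Finset (Fin 4 → ℕ) :=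
  univ.image fun ij : Fin 4 × Fin 4 => Pi.single ij.1 1 + gradExponent ij.2

def sliceExponents : Finset (Fin 4 → ℕ) :=
  {![3, 0, 0, 0], ![0, 3, 0, 0], ![0, 0, 3, 0], ![2, 0, 0, 1], ![0, 2, 0, 1], ![0, 0, 2, 1]}

theorem tangentExponents_union_sliceExponents :
    tangentExponents ∪ sliceExponents = Nat.antidiagonalTuple 4 3 := by
  decide

theorem disjoint_tangentExponents_sliceExponents : Disjoint tangentExponents sliceExponents := by
  decide

theorem card_tangentExponents : #tangentExponents = 14 := by
  decide

theorem card_sliceExponents : #sliceExponents = 6 := by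
  decide

theorem pderiv_F3A2 (j : Fin 4) :
    pderiv j F3A2 = monomial (Finsupp.equivFunOnFinite.symm (gradExponent j)) (gradCoeff j) := by
  rw [monomial_equivFunOnFinite_symm, Fin.prod_univ_four]
  fin_cases j <;> simp [F3A2, gradExponent, gradCoeff, mul_comm, map_ofNat C]

theorem X_mul_pderiv_F3A2 (i j : Fin 4) :
    X i * pderiv j F3A2 =
      monomial (Finsupp.equivFunOnFinite.symm (Pi.single i 1 + gradExponent j)) (gradCoeff j) := by
  have h_exp : Finsupp.equivFunOnFinite.symm (Pi.single i 1 + gradExponent j) =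
      Finsupp.single i 1 + Finsupp.equivFunOnFinite.symm (gradExponent j) := by
    ext
    simp [Finsupp.single_apply, Pi.single_apply, eq_comm]
  rw [h_exp, monomial_single_add, pow_one, pderiv_F3A2]

theorem orbitTangent_eq_monomialSpan : orbitTangent = monomialSpan ℂ tangentExponents := by
  have h_gens : {P | ∃ i j : Fin 4, P = X i * pderiv j F3A2} =
      Set.range fun ij : Fin 4 × Fin 4 => X ij.1 * pderiv ij.2 F3A2 := by
    ext
    simp [eq_comm]
  rw [orbitTangent, h_gens, tangentExponents, ← span_range_monomial_eq_monomialSpan _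
    (fun ij => gradCoeff ij.2) fun ij => by fin_cases ij <;> simp [gradCoeff]]
  simp only [X_mul_pderiv_F3A2]

theorem lunaSlice_eq_monomialSpan : lunaSlice = monomialSpan ℂ sliceExponents := by
  rw [lunaSlice, monomialSpan_eq_span]
  simp [sliceExponents, Set.image_insert_eq, monomial_equivFunOnFinite_symm, Fin.prod_univ_four]

/-- The 20-dimensional space V of homogeneous cubic forms in x₀,...,x₃ is the internal
direct sum of the 14-dimensional span S of the 16 polynomials xᵢ·∂F/∂xⱼ and the
6-dimensional Luna slice W spanned by x₀³, x₁³, x₂³, x₀²x₃, x₁²x₃, x₂²x₃. -/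
theorem luna_slice_complement :
    orbitTangent ⊔ lunaSlice = MvPolynomial.homogeneousSubmodule (Fin 4) ℂ 3 ∧
    Disjoint orbitTangent lunaSlice ∧
    Module.finrank ℂ orbitTangent = 14 ∧
    Module.finrank ℂ lunaSlice = 6 := by
  rw [orbitTangent_eq_monomialSpan, lunaSlice_eq_monomialSpan, ← monomialSpan_union,
    tangentExponents_union_sliceExponents, ← homogeneousSubmodule_eq_monomialSpan,
    finrank_monomialSpan, finrank_monomialSpan, card_tangentExponents, card_sliceExponents]
  exact ⟨rfl, disjoint_monomialSpan disjoint_tangentExponents_sliceExponents, rfl, rfl⟩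
end

section
/- If A ∈ GL(4,ℂ) satisfies F∘A = c·F for some nonzero c ∈ ℂ, then the 6-dimensional subspace W spanned by the monomials x₀³, x₁³, x₂³, x₀²x₃, x₁²x₃, x₂²x₃ is invariant under A: for every P ∈ W, the polynomial P∘A again lies in W. (The Luna slice at the 3A₂ cubic surface is invariant under its stabilizer.) -/
open MvPolynomial

/-- At most one of three numbers is nonzero, given that pairwise products vanish. -/
lemma tri3A2 {x y z : ℂ} (hxy : x * y = 0) (hxz : x * z = 0) (hyz : y * z = 0) :
    (y = 0 ∧ z = 0) ∨ (x = 0 ∧ z = 0) ∨ (x = 0 ∧ y = 0) := by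
  rcases mul_eq_zero.mp hxy with hx | hy
  · rcases mul_eq_zero.mp hyz with hy | hz
    · exact Or.inr (Or.inr ⟨hx, hy⟩)
    · exact Or.inr (Or.inl ⟨hx, hz⟩)
  · rcases mul_eq_zero.mp hxz with hx | hz
    · exact Or.inr (Or.inr ⟨hx, hy⟩)
    · exact Or.inl ⟨hy, hz⟩

/-- Explicit 24-term expansion of a 4×4 determinant. -/
lemma det_fin_four3A2 (A : Matrix (Fin 4) (Fin 4) ℂ) :
    A.det =
      A 0 0 * A 1 1 * A 2 2 * A 3 3 - A 0 0 * A 1 1 * A 2 3 * A 3 2 -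
      A 0 0 * A 1 2 * A 2 1 * A 3 3 + A 0 0 * A 1 2 * A 2 3 * A 3 1 +
      A 0 0 * A 1 3 * A 2 1 * A 3 2 - A 0 0 * A 1 3 * A 2 2 * A 3 1 -
      A 0 1 * A 1 0 * A 2 2 * A 3 3 + A 0 1 * A 1 0 * A 2 3 * A 3 2 +
      A 0 1 * A 1 2 * A 2 0 * A 3 3 - A 0 1 * A 1 2 * A 2 3 * A 3 0 -
      A 0 1 * A 1 3 * A 2 0 * A 3 2 + A 0 1 * A 1 3 * A 2 2 * A 3 0 +
      A 0 2 * A 1 0 * A 2 1 * A 3 3 - A 0 2 * A 1 0 * A 2 3 * A 3 1 -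
      A 0 2 * A 1 1 * A 2 0 * A 3 3 + A 0 2 * A 1 1 * A 2 3 * A 3 0 +
      A 0 2 * A 1 3 * A 2 0 * A 3 1 - A 0 2 * A 1 3 * A 2 1 * A 3 0 -
      A 0 3 * A 1 0 * A 2 1 * A 3 2 + A 0 3 * A 1 0 * A 2 2 * A 3 1 +
      A 0 3 * A 1 1 * A 2 0 * A 3 2 - A 0 3 * A 1 1 * A 2 2 * A 3 0 -
      A 0 3 * A 1 2 * A 2 0 * A 3 1 + A 0 3 * A 1 2 * A 2 1 * A 3 0 := by
  rw [Matrix.det_succ_row_zero, Fin.sum_univ_four]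
  simp [Matrix.det_fin_three, Matrix.submatrix, Fin.succAbove, Fin.lt_def]
  norm_num
  ring

open Matrix in
/-- If the gradient-type vector built from `v` pairs to zero with every column of an
invertible matrix, then it vanishes. -/
lemma colstruct3A2 (A : Matrix (Fin 4) (Fin 4) ℂ) (hA : IsUnit A.det) (v0 v1 v2 v3 : ℂ)
    (hv : ∀ j, v1 * v2 * A 0 j + v0 * v2 * A 1 j + v0 * v1 * A 2 j
        + 3 * v3 ^ 2 * A 3 j = 0) :
    v1 * v2 = 0 ∧ v0 * v2 = 0 ∧ v0 * v1 = 0 ∧ v3 = 0 := by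
  have hw : (![v1 * v2, v0 * v2, v0 * v1, 3 * v3 ^ 2] : Fin 4 → ℂ) ᵥ* A = 0 := by
    funext j
    have := hv j
    simp only [Matrix.vecMul, dotProduct, Fin.sum_univ_four,
      Matrix.cons_val_zero, Matrix.cons_val_one, Matrix.head_cons, Matrix.cons_val_two,
      Matrix.tail_cons, Matrix.cons_val_three, Pi.zero_apply]
    linear_combination this
  have hw0 : (![v1 * v2, v0 * v2, v0 * v1, 3 * v3 ^ 2] : Fin 4 → ℂ) = 0 := by
    have h1 : (![v1 * v2, v0 * v2, v0 * v1, 3 * v3 ^ 2] : Fin 4 → ℂ) ᵥ* (A * A⁻¹)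
        = (0 : Fin 4 → ℂ) ᵥ* A⁻¹ := by
      rw [← Matrix.vecMul_vecMul, hw]
    rwa [Matrix.mul_nonsing_inv A hA, Matrix.vecMul_one, Matrix.zero_vecMul] at h1
  have h0 := congrFun hw0 0
  have h1 := congrFun hw0 1
  have h2 := congrFun hw0 2
  have h3 := congrFun hw0 3
  simp only [Matrix.cons_val_zero, Matrix.cons_val_one, Matrix.head_cons,
    Matrix.cons_val_two, Matrix.tail_cons, Matrix.cons_val_three, Pi.zero_apply] at h0 h1 h2 h3
  refine ⟨h0, h1, h2, ?_⟩
  have h3' : v3 ^ 2 = 0 := by linear_combination h3 / 3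
  exact pow_eq_zero_iff two_ne_zero |>.mp h3'

/-- If every row of `A` is supported on the single column `t i`, with `t 3 = 3` and
`t i ≠ 3` for `i ≠ 3`, then substitution by `A` preserves the Luna slice. -/
lemma key3A2 (A : Matrix (Fin 4) (Fin 4) ℂ) (t : Fin 4 → Fin 4) (ht3 : t 3 = 3)
    (hlt : ∀ i : Fin 4, i ≠ 3 → t i ≠ 3)
    (hz : ∀ i k, k ≠ t i → A i k = 0) :
    ∀ P ∈ lunaSlice, actM A P ∈ lunaSlice := by
  have hc : ∀ m : Fin 4, m = 0 ∨ m = 1 ∨ m = 2 ∨ m = 3 := by decide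
  have hφ : ∀ i : Fin 4,
      (∑ k : Fin 4, (C (A i k) * X k : MvPolynomial (Fin 4) ℂ)) = C (A i (t i)) * X (t i) := by
    intro i
    rcases hc (t i) with h | h | h | h
    · rw [Fin.sum_univ_four, h, hz i 1 (by rw [h]; decide), hz i 2 (by rw [h]; decide),
        hz i 3 (by rw [h]; decide)]
      simp
    · rw [Fin.sum_univ_four, h, hz i 0 (by rw [h]; decide), hz i 2 (by rw [h]; decide),
        hz i 3 (by rw [h]; decide)]
      simp
    · rw [Fin.sum_univ_four, h, hz i 0 (by rw [h]; decide), hz i 1 (by rw [h]; decide),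
        hz i 3 (by rw [h]; decide)]
      simp
    · rw [Fin.sum_univ_four, h, hz i 0 (by rw [h]; decide), hz i 1 (by rw [h]; decide),
        hz i 2 (by rw [h]; decide)]
      simp
  have hmem3 : ∀ j : Fin 4, j ≠ 3 → (X j ^ 3 : MvPolynomial (Fin 4) ℂ) ∈
      ({X 0 ^ 3, X 1 ^ 3, X 2 ^ 3, X 0 ^ 2 * X 3, X 1 ^ 2 * X 3, X 2 ^ 2 * X 3} :
        Set (MvPolynomial (Fin 4) ℂ)) := by
    intro j hj
    rcases hc j with h | h | h | h <;> subst h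
    · exact Set.mem_insert _ _
    · exact Set.mem_insert_of_mem _ (Set.mem_insert _ _)
    · exact Set.mem_insert_of_mem _ (Set.mem_insert_of_mem _ (Set.mem_insert _ _))
    · exact absurd rfl hj
  have hmem2 : ∀ j : Fin 4, j ≠ 3 → (X j ^ 2 * X 3 : MvPolynomial (Fin 4) ℂ) ∈
      ({X 0 ^ 3, X 1 ^ 3, X 2 ^ 3, X 0 ^ 2 * X 3, X 1 ^ 2 * X 3, X 2 ^ 2 * X 3} :
        Set (MvPolynomial (Fin 4) ℂ)) := by
    intro j hj
    rcases hc j with h | h | h | h <;> subst h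
    · exact Set.mem_insert_of_mem _ (Set.mem_insert_of_mem _ (Set.mem_insert_of_mem _
        (Set.mem_insert _ _)))
    · exact Set.mem_insert_of_mem _ (Set.mem_insert_of_mem _ (Set.mem_insert_of_mem _
        (Set.mem_insert_of_mem _ (Set.mem_insert _ _))))
    · exact Set.mem_insert_of_mem _ (Set.mem_insert_of_mem _ (Set.mem_insert_of_mem _
        (Set.mem_insert_of_mem _ (Set.mem_insert_of_mem _ rfl))))
    · exact absurd rfl hj
  have hcube : ∀ i : Fin 4, i ≠ 3 → actM A (X i ^ 3) ∈ lunaSlice := by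
    intro i hi
    have hact : actM A (X i ^ 3) = (A i (t i)) ^ 3 • (X (t i) ^ 3 : MvPolynomial (Fin 4) ℂ) := by
      show (aeval _) (X i ^ 3) = _
      rw [map_pow, aeval_X]
      show (∑ k : Fin 4, (C (A i k) * X k : MvPolynomial (Fin 4) ℂ)) ^ 3 = _
      rw [hφ i, smul_eq_C_mul, map_pow, mul_pow]
    rw [hact]
    exact Submodule.smul_mem _ _ (Submodule.subset_span (hmem3 (t i) (hlt i hi)))
  have hmix : ∀ i : Fin 4, i ≠ 3 → actM A (X i ^ 2 * X 3) ∈ lunaSlice := by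
    intro i hi
    have hact : actM A (X i ^ 2 * X 3)
        = ((A i (t i)) ^ 2 * A 3 3) • (X (t i) ^ 2 * X 3 : MvPolynomial (Fin 4) ℂ) := by
      show (aeval _) (X i ^ 2 * X 3) = _
      rw [_root_.map_mul, map_pow, aeval_X, aeval_X]
      show (∑ k : Fin 4, (C (A i k) * X k : MvPolynomial (Fin 4) ℂ)) ^ 2 *
        (∑ k : Fin 4, (C (A 3 k) * X k : MvPolynomial (Fin 4) ℂ)) = _
      rw [hφ i, hφ 3, ht3, smul_eq_C_mul, _root_.map_mul, map_pow]
      ring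
    rw [hact]
    exact Submodule.smul_mem _ _ (Submodule.subset_span (hmem2 (t i) (hlt i hi)))
  intro P hP
  refine Submodule.span_induction ?_ ?_ ?_ ?_ hP
  · intro g hg
    simp only [Set.mem_insert_iff, Set.mem_singleton_iff] at hg
    rcases hg with rfl | rfl | rfl | rfl | rfl | rfl
    · exact hcube 0 (by decide)
    · exact hcube 1 (by decide)
    · exact hcube 2 (by decide)
    · exact hmix 0 (by decide)
    · exact hmix 1 (by decide)
    · exact hmix 2 (by decide)
  · simp only [actM, map_zero]; exact Submodule.zero_mem _
  · intro x y _ _ hx hy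
    simp only [actM, map_add]; exact Submodule.add_mem _ hx hy
  · intro r x _ hx
    show actM A (r • x) ∈ lunaSlice
    rw [actM, _root_.map_smul]
    exact Submodule.smul_mem _ _ hx

/-- The Luna slice at the 3A₂ cubic is invariant under the stabilizer: if A ∈ GL(4,ℂ)
satisfies F∘A = c·F for some nonzero c, then P∘A ∈ W for every P ∈ W, where W is the
span of x₀³, x₁³, x₂³, x₀²x₃, x₁²x₃, x₂²x₃. -/
theorem luna_slice_invariant_under_stabilizer (A : Matrix (Fin 4) (Fin 4) ℂ)
    (hA : IsUnit A.det) (c : ℂ) (hc : c ≠ 0) (hF : actM A F3A2 = c • F3A2) :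
    ∀ P ∈ lunaSlice, actM A P ∈ lunaSlice := by
  have hdet : A.det ≠ 0 := hA.ne_zero
  have hc4 : ∀ m : Fin 4, m = 0 ∨ m = 1 ∨ m = 2 ∨ m = 3 := by decide
  have E : ∀ x0 x1 x2 x3 : ℂ,
      (A 0 0 * x0 + A 0 1 * x1 + A 0 2 * x2 + A 0 3 * x3) *
      (A 1 0 * x0 + A 1 1 * x1 + A 1 2 * x2 + A 1 3 * x3) *
      (A 2 0 * x0 + A 2 1 * x1 + A 2 2 * x2 + A 2 3 * x3) +
      (A 3 0 * x0 + A 3 1 * x1 + A 3 2 * x2 + A 3 3 * x3) ^ 3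
      = c * (x0 * x1 * x2 + x3 ^ 3) := by
    intro x0 x1 x2 x3
    have h := congrArg (MvPolynomial.eval ![x0, x1, x2, x3]) hF
    simp only [actM, F3A2, map_add, _root_.map_mul, map_pow, aeval_X, map_sum, eval_C, eval_X,
      smul_eq_C_mul, Fin.sum_univ_four, Matrix.cons_val_zero, Matrix.cons_val_one,
      Matrix.head_cons, Matrix.cons_val_two, Matrix.tail_cons, Matrix.cons_val_three] at h
    linear_combination h
  have hv0 : ∀ j : Fin 4, A 1 0 * A 2 0 * A 0 j + A 0 0 * A 2 0 * A 1 j +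
      A 0 0 * A 1 0 * A 2 j + 3 * A 3 0 ^ 2 * A 3 j = 0 := by
    intro j
    rcases hc4 j with h | h | h | h <;> subst h
    · linear_combination (-1/2 : ℂ) * E 1 0 0 0 + E 2 0 0 0 - (1/3 : ℂ) * E 0 0 0 0 -
        (1/6 : ℂ) * E 3 0 0 0
    · linear_combination (-1/2 : ℂ) * E 1 0 0 0 + E 1 1 0 0 - (1/3 : ℂ) * E 1 (-1 : ℂ) 0 0 -
        (1/6 : ℂ) * E 1 2 0 0
    · linear_combination (-1/2 : ℂ) * E 1 0 0 0 + E 1 0 1 0 - (1/3 : ℂ) * E 1 0 (-1 : ℂ) 0 -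
        (1/6 : ℂ) * E 1 0 2 0
    · linear_combination (-1/2 : ℂ) * E 1 0 0 0 + E 1 0 0 1 - (1/3 : ℂ) * E 1 0 0 (-1 : ℂ) -
        (1/6 : ℂ) * E 1 0 0 2
  obtain ⟨p120, p020, p010, h30⟩ := colstruct3A2 A hA (A 0 0) (A 1 0) (A 2 0) (A 3 0) hv0
  have hv1 : ∀ j : Fin 4, A 1 1 * A 2 1 * A 0 j + A 0 1 * A 2 1 * A 1 j +
      A 0 1 * A 1 1 * A 2 j + 3 * A 3 1 ^ 2 * A 3 j = 0 := by
    intro j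
    rcases hc4 j with h | h | h | h <;> subst h
    · linear_combination (-1/2 : ℂ) * E 0 1 0 0 + E 1 1 0 0 - (1/3 : ℂ) * E (-1 : ℂ) 1 0 0 -
        (1/6 : ℂ) * E 2 1 0 0
    · linear_combination (-1/2 : ℂ) * E 0 1 0 0 + E 0 2 0 0 - (1/3 : ℂ) * E 0 0 0 0 -
        (1/6 : ℂ) * E 0 3 0 0
    · linear_combination (-1/2 : ℂ) * E 0 1 0 0 + E 0 1 1 0 - (1/3 : ℂ) * E 0 1 (-1 : ℂ) 0 -
        (1/6 : ℂ) * E 0 1 2 0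
    · linear_combination (-1/2 : ℂ) * E 0 1 0 0 + E 0 1 0 1 - (1/3 : ℂ) * E 0 1 0 (-1 : ℂ) -
        (1/6 : ℂ) * E 0 1 0 2
  obtain ⟨p121, p021, p011, h31⟩ := colstruct3A2 A hA (A 0 1) (A 1 1) (A 2 1) (A 3 1) hv1
  have hv2 : ∀ j : Fin 4, A 1 2 * A 2 2 * A 0 j + A 0 2 * A 2 2 * A 1 j +
      A 0 2 * A 1 2 * A 2 j + 3 * A 3 2 ^ 2 * A 3 j = 0 := by
    intro j
    rcases hc4 j with h | h | h | h <;> subst h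
    · linear_combination (-1/2 : ℂ) * E 0 0 1 0 + E 1 0 1 0 - (1/3 : ℂ) * E (-1 : ℂ) 0 1 0 -
        (1/6 : ℂ) * E 2 0 1 0
    · linear_combination (-1/2 : ℂ) * E 0 0 1 0 + E 0 1 1 0 - (1/3 : ℂ) * E 0 (-1 : ℂ) 1 0 -
        (1/6 : ℂ) * E 0 2 1 0
    · linear_combination (-1/2 : ℂ) * E 0 0 1 0 + E 0 0 2 0 - (1/3 : ℂ) * E 0 0 0 0 -
        (1/6 : ℂ) * E 0 0 3 0
    · linear_combination (-1/2 : ℂ) * E 0 0 1 0 + E 0 0 1 1 - (1/3 : ℂ) * E 0 0 1 (-1 : ℂ) -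
        (1/6 : ℂ) * E 0 0 1 2
  obtain ⟨p122, p022, p012, h32⟩ := colstruct3A2 A hA (A 0 2) (A 1 2) (A 2 2) (A 3 2) hv2
  have T01 : A 0 0 * A 1 1 * A 2 3 + A 0 0 * A 1 3 * A 2 1 +
      A 0 1 * A 1 0 * A 2 3 + A 0 1 * A 1 3 * A 2 0 +
      A 0 3 * A 1 0 * A 2 1 + A 0 3 * A 1 1 * A 2 0 = 0 := by
    linear_combination -E 0 0 0 0 + E 1 0 0 0 + E 0 1 0 0 + E 0 0 0 1 - E 1 1 0 0 - E 1 0 0 1 - E 0 1 0 1 + E 1 1 0 1 -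
      (6 * A 3 1 * A 3 3) * h30
  have T02 : A 0 0 * A 1 2 * A 2 3 + A 0 0 * A 1 3 * A 2 2 +
      A 0 2 * A 1 0 * A 2 3 + A 0 2 * A 1 3 * A 2 0 +
      A 0 3 * A 1 0 * A 2 2 + A 0 3 * A 1 2 * A 2 0 = 0 := by
    linear_combination -E 0 0 0 0 + E 1 0 0 0 + E 0 0 1 0 + E 0 0 0 1 - E 1 0 1 0 - E 1 0 0 1 - E 0 0 1 1 + E 1 0 1 1 -
      (6 * A 3 2 * A 3 3) * h30
  have T12 : A 0 1 * A 1 2 * A 2 3 + A 0 1 * A 1 3 * A 2 2 +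
      A 0 2 * A 1 1 * A 2 3 + A 0 2 * A 1 3 * A 2 1 +
      A 0 3 * A 1 1 * A 2 2 + A 0 3 * A 1 2 * A 2 1 = 0 := by
    linear_combination -E 0 0 0 0 + E 0 1 0 0 + E 0 0 1 0 + E 0 0 0 1 - E 0 1 1 0 - E 0 1 0 1 - E 0 0 1 1 + E 0 1 1 1 -
      (6 * A 3 2 * A 3 3) * h31
  rcases tri3A2 p010 p020 p120 with ⟨c0a, c0b⟩ | ⟨c0a, c0b⟩ | ⟨c0a, c0b⟩ <;>
    rcases tri3A2 p011 p021 p121 with ⟨c1a, c1b⟩ | ⟨c1a, c1b⟩ | ⟨c1a, c1b⟩ <;>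
    rcases tri3A2 p012 p022 p122 with ⟨c2a, c2b⟩ | ⟨c2a, c2b⟩ | ⟨c2a, c2b⟩
  all_goals first
    | (refine absurd ?_ hdet
       rw [det_fin_four3A2, c0a, c0b, c1a, c1b, c2a, c2b, h30, h31, h32]; ring1)
    | skip
  -- shape (0, 1, 2): column i nonzero in row s_i
  · -- good case
    have n0 : A 0 0 ≠ 0 := fun h => hdet (by
      rw [det_fin_four3A2, h, c0a, c0b, h30]; ring)
    have n1 : A 1 1 ≠ 0 := fun h => hdet (by
      rw [det_fin_four3A2, h, c1a, c1b, h31]; ring)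
    have n2 : A 2 2 ≠ 0 := fun h => hdet (by
      rw [det_fin_four3A2, h, c2a, c2b, h32]; ring)
    have e23 : A 2 3 = 0 := by
      have h := T01
      rw [c0a, c0b, c1a, c1b] at h
      simp only [zero_mul, mul_zero, add_zero, zero_add] at h
      exact (mul_eq_zero.mp h).resolve_left (mul_ne_zero n0 n1)
    have e13 : A 1 3 = 0 := by
      have h := T02
      rw [c0a, c0b, c2a, c2b] at h
      simp only [zero_mul, mul_zero, add_zero, zero_add] at h
      have h' := (mul_eq_zero.mp h).resolve_right n2
      exact (mul_eq_zero.mp h').resolve_left n0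
    have e03 : A 0 3 = 0 := by
      have h := T12
      rw [c1a, c1b, c2a, c2b] at h
      simp only [zero_mul, mul_zero, add_zero, zero_add] at h
      have h' := (mul_eq_zero.mp h).resolve_right n2
      exact (mul_eq_zero.mp h').resolve_right n1
    exact key3A2 A ![0, 1, 2, 3] (by decide) (by decide)
      (by intro i k hk
          rcases hc4 i with rfl | rfl | rfl | rfl <;> rcases hc4 k with rfl | rfl | rfl | rfl <;>
            first | assumption | (exact absurd (by decide) hk))
  -- shape (0, 2, 1): column i nonzero in row s_i
  · -- good case
    have n0 : A 0 0 ≠ 0 := fun h => hdet (by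
      rw [det_fin_four3A2, h, c0a, c0b, h30]; ring)
    have n1 : A 1 2 ≠ 0 := fun h => hdet (by
      rw [det_fin_four3A2, h, c2a, c2b, h32]; ring)
    have n2 : A 2 1 ≠ 0 := fun h => hdet (by
      rw [det_fin_four3A2, h, c1a, c1b, h31]; ring)
    have e13 : A 1 3 = 0 := by
      have h := T01
      rw [c0a, c0b, c1a, c1b] at h
      simp only [zero_mul, mul_zero, add_zero, zero_add] at h
      have h' := (mul_eq_zero.mp h).resolve_right n2
      exact (mul_eq_zero.mp h').resolve_left n0
    have e23 : A 2 3 = 0 := by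
      have h := T02
      rw [c0a, c0b, c2a, c2b] at h
      simp only [zero_mul, mul_zero, add_zero, zero_add] at h
      exact (mul_eq_zero.mp h).resolve_left (mul_ne_zero n0 n1)
    have e03 : A 0 3 = 0 := by
      have h := T12
      rw [c1a, c1b, c2a, c2b] at h
      simp only [zero_mul, mul_zero, add_zero, zero_add] at h
      have h' := (mul_eq_zero.mp h).resolve_right n2
      exact (mul_eq_zero.mp h').resolve_right n1
    exact key3A2 A ![0, 2, 1, 3] (by decide) (by decide)
      (by intro i k hk
          rcases hc4 i with rfl | rfl | rfl | rfl <;> rcases hc4 k with rfl | rfl | rfl | rfl <;>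
            first | assumption | (exact absurd (by decide) hk))
  -- shape (1, 0, 2): column i nonzero in row s_i
  · -- good case
    have n0 : A 0 1 ≠ 0 := fun h => hdet (by
      rw [det_fin_four3A2, h, c1a, c1b, h31]; ring)
    have n1 : A 1 0 ≠ 0 := fun h => hdet (by
      rw [det_fin_four3A2, h, c0a, c0b, h30]; ring)
    have n2 : A 2 2 ≠ 0 := fun h => hdet (by
      rw [det_fin_four3A2, h, c2a, c2b, h32]; ring)
    have e23 : A 2 3 = 0 := by
      have h := T01
      rw [c0a, c0b, c1a, c1b] at h
      simp only [zero_mul, mul_zero, add_zero, zero_add] at h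
      exact (mul_eq_zero.mp h).resolve_left (mul_ne_zero n0 n1)
    have e03 : A 0 3 = 0 := by
      have h := T02
      rw [c0a, c0b, c2a, c2b] at h
      simp only [zero_mul, mul_zero, add_zero, zero_add] at h
      have h' := (mul_eq_zero.mp h).resolve_right n2
      exact (mul_eq_zero.mp h').resolve_right n1
    have e13 : A 1 3 = 0 := by
      have h := T12
      rw [c1a, c1b, c2a, c2b] at h
      simp only [zero_mul, mul_zero, add_zero, zero_add] at h
      have h' := (mul_eq_zero.mp h).resolve_right n2
      exact (mul_eq_zero.mp h').resolve_left n0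
    exact key3A2 A ![1, 0, 2, 3] (by decide) (by decide)
      (by intro i k hk
          rcases hc4 i with rfl | rfl | rfl | rfl <;> rcases hc4 k with rfl | rfl | rfl | rfl <;>
            first | assumption | (exact absurd (by decide) hk))
  -- shape (1, 2, 0): column i nonzero in row s_i
  · -- good case
    have n0 : A 0 2 ≠ 0 := fun h => hdet (by
      rw [det_fin_four3A2, h, c2a, c2b, h32]; ring)
    have n1 : A 1 0 ≠ 0 := fun h => hdet (by
      rw [det_fin_four3A2, h, c0a, c0b, h30]; ring)
    have n2 : A 2 1 ≠ 0 := fun h => hdet (by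
      rw [det_fin_four3A2, h, c1a, c1b, h31]; ring)
    have e03 : A 0 3 = 0 := by
      have h := T01
      rw [c0a, c0b, c1a, c1b] at h
      simp only [zero_mul, mul_zero, add_zero, zero_add] at h
      have h' := (mul_eq_zero.mp h).resolve_right n2
      exact (mul_eq_zero.mp h').resolve_right n1
    have e23 : A 2 3 = 0 := by
      have h := T02
      rw [c0a, c0b, c2a, c2b] at h
      simp only [zero_mul, mul_zero, add_zero, zero_add] at h
      exact (mul_eq_zero.mp h).resolve_left (mul_ne_zero n0 n1)
    have e13 : A 1 3 = 0 := by
      have h := T12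
      rw [c1a, c1b, c2a, c2b] at h
      simp only [zero_mul, mul_zero, add_zero, zero_add] at h
      have h' := (mul_eq_zero.mp h).resolve_right n2
      exact (mul_eq_zero.mp h').resolve_left n0
    exact key3A2 A ![2, 0, 1, 3] (by decide) (by decide)
      (by intro i k hk
          rcases hc4 i with rfl | rfl | rfl | rfl <;> rcases hc4 k with rfl | rfl | rfl | rfl <;>
            first | assumption | (exact absurd (by decide) hk))
  -- shape (2, 0, 1): column i nonzero in row s_i
  · -- good case
    have n0 : A 0 1 ≠ 0 := fun h => hdet (by
      rw [det_fin_four3A2, h, c1a, c1b, h31]; ring)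
    have n1 : A 1 2 ≠ 0 := fun h => hdet (by
      rw [det_fin_four3A2, h, c2a, c2b, h32]; ring)
    have n2 : A 2 0 ≠ 0 := fun h => hdet (by
      rw [det_fin_four3A2, h, c0a, c0b, h30]; ring)
    have e13 : A 1 3 = 0 := by
      have h := T01
      rw [c0a, c0b, c1a, c1b] at h
      simp only [zero_mul, mul_zero, add_zero, zero_add] at h
      have h' := (mul_eq_zero.mp h).resolve_right n2
      exact (mul_eq_zero.mp h').resolve_left n0
    have e03 : A 0 3 = 0 := by
      have h := T02
      rw [c0a, c0b, c2a, c2b] at h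
      simp only [zero_mul, mul_zero, add_zero, zero_add] at h
      have h' := (mul_eq_zero.mp h).resolve_right n2
      exact (mul_eq_zero.mp h').resolve_right n1
    have e23 : A 2 3 = 0 := by
      have h := T12
      rw [c1a, c1b, c2a, c2b] at h
      simp only [zero_mul, mul_zero, add_zero, zero_add] at h
      exact (mul_eq_zero.mp h).resolve_left (mul_ne_zero n0 n1)
    exact key3A2 A ![1, 2, 0, 3] (by decide) (by decide)
      (by intro i k hk
          rcases hc4 i with rfl | rfl | rfl | rfl <;> rcases hc4 k with rfl | rfl | rfl | rfl <;>
            first | assumption | (exact absurd (by decide) hk))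
  -- shape (2, 1, 0): column i nonzero in row s_i
  · -- good case
    have n0 : A 0 2 ≠ 0 := fun h => hdet (by
      rw [det_fin_four3A2, h, c2a, c2b, h32]; ring)
    have n1 : A 1 1 ≠ 0 := fun h => hdet (by
      rw [det_fin_four3A2, h, c1a, c1b, h31]; ring)
    have n2 : A 2 0 ≠ 0 := fun h => hdet (by
      rw [det_fin_four3A2, h, c0a, c0b, h30]; ring)
    have e03 : A 0 3 = 0 := by
      have h := T01
      rw [c0a, c0b, c1a, c1b] at h
      simp only [zero_mul, mul_zero, add_zero, zero_add] at h
      have h' := (mul_eq_zero.mp h).resolve_right n2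
      exact (mul_eq_zero.mp h').resolve_right n1
    have e13 : A 1 3 = 0 := by
      have h := T02
      rw [c0a, c0b, c2a, c2b] at h
      simp only [zero_mul, mul_zero, add_zero, zero_add] at h
      have h' := (mul_eq_zero.mp h).resolve_right n2
      exact (mul_eq_zero.mp h').resolve_left n0
    have e23 : A 2 3 = 0 := by
      have h := T12
      rw [c1a, c1b, c2a, c2b] at h
      simp only [zero_mul, mul_zero, add_zero, zero_add] at h
      exact (mul_eq_zero.mp h).resolve_left (mul_ne_zero n0 n1)
    exact key3A2 A ![2, 1, 0, 3] (by decide) (by decide)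
      (by intro i k hk
          rcases hc4 i with rfl | rfl | rfl | rfl <;> rcases hc4 k with rfl | rfl | rfl | rfl <;>
            first | assumption | (exact absurd (by decide) hk))
end

section
/- Consider the action ρ of the torus (ℂˣ)² on ℂ⁶ given by ρ(λ₁,λ₂)·(v₀,v₁,v₂,w₀,w₁,w₂) = (λ₁⁻³λ₂⁻³v₀, λ₁³v₁, λ₂³v₂, λ₁⁻²λ₂⁻²w₀, λ₁²w₁, λ₂²w₂). For every point (v₀,v₁,v₂,w₀,w₁,w₂) ∈ ℂ⁶, the origin 0 ∈ ℂ⁶ lies in the topological closure of the orbit {ρ(λ₁,λ₂)·(v,w) : λ₁,λ₂ ∈ ℂˣ} if and only if (v₀ = 0 and w₀ = 0) or (v₁ = 0 and w₁ = 0) or (v₂ = 0 and w₂ = 0). (Equivalently: the unstable locus of the induced action on ℙ⁵, the exceptional divisor of the Kirwan blowup of the Luna slice at the 3A₂ cubic, is the union of the three codimension-two loci {Tᵢ = T_{î} = 0}, i = 0,1,2.) -/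
/-!
The pair (vᵢ, wᵢ) has weights (3χᵢ, 2χᵢ) for the characters χ₀ = (λ₁λ₂)⁻¹,
χ₁ = λ₁, χ₂ = λ₂, whose product is trivial. Hence each ‖vᵢ‖² + ‖wᵢ‖³ is multiplied by
|χᵢ|⁶ and their product is a continuous orbit invariant, vanishing at the origin and
nonzero unless some (vᵢ, wᵢ) = 0. Conversely, if (vᵢ, wᵢ) = 0, a one-parameter subgroup
on which χⱼ(t) = t for the two indices j ≠ i moves (v, w) to (t³v, t²w) → 0.
-/

/-- The torus (ℂˣ)² action on ℂ⁶ (coordinates (v₀,v₁,v₂,w₀,w₁,w₂)) induced by the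
identity component of the stabilizer of the 3A₂ cubic on the affine cone over the
exceptional ℙ⁵ of the Kirwan blowup:
ρ(λ₁,λ₂)·(v,w) = (λ₁⁻³λ₂⁻³v₀, λ₁³v₁, λ₂³v₂, λ₁⁻²λ₂⁻²w₀, λ₁²w₁, λ₂²w₂). -/
noncomputable def torusAct (l1 l2 : ℂ) (v w : Fin 3 → ℂ) :
    (Fin 3 → ℂ) × (Fin 3 → ℂ) :=
  (![l1⁻¹ ^ 3 * l2⁻¹ ^ 3 * v 0, l1 ^ 3 * v 1, l2 ^ 3 * v 2],
   ![l1⁻¹ ^ 2 * l2⁻¹ ^ 2 * w 0, l1 ^ 2 * w 1, l2 ^ 2 * w 2])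

def torusOrbit (v w : Fin 3 → ℂ) : Set ((Fin 3 → ℂ) × (Fin 3 → ℂ)) :=
  {q | ∃ l1 l2 : ℂ, l1 ≠ 0 ∧ l2 ≠ 0 ∧ q = torusAct l1 l2 v w}

theorem mem_closure_of_continuous_of_forall_ne {𝕜 X : Type*} [NontriviallyNormedField 𝕜]
    [TopologicalSpace X] {S : Set X} {g : 𝕜 → X} {a : 𝕜} (hg : Continuous g)
    (hS : ∀ t ≠ a, g t ∈ S) : g a ∈ closure S :=
  map_mem_closure (s := {a}ᶜ) hg (by rw [closure_compl_singleton]; trivial) fun _ ht => hS _ ht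

theorem zero_mem_closure_torusOrbit_of_weighted_scaling {v w : Fin 3 → ℂ}
    (h : ∀ t : ℂ, t ≠ 0 → (t ^ 3 • v, t ^ 2 • w) ∈ torusOrbit v w) :
    0 ∈ closure (torusOrbit v w) := by
  have := mem_closure_of_continuous_of_forall_ne
    (g := fun t : ℂ => (t ^ 3 • v, t ^ 2 • w)) (by fun_prop) h
  simpa [Prod.zero_eq_mk] using this

theorem weighted_scaling_mem_torusOrbit {v w : Fin 3 → ℂ} {i : Fin 3} (hv : v i = 0)
    (hw : w i = 0) {t : ℂ} (ht : t ≠ 0) : (t ^ 3 • v, t ^ 2 • w) ∈ torusOrbit v w := by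
  fin_cases i
  · refine ⟨t, t, ht, ht, ?_⟩
    ext j <;> fin_cases j <;> simp_all [torusAct]
  · refine ⟨(t ^ 2)⁻¹, t, by simpa, ht, ?_⟩
    ext j <;> fin_cases j <;> simp_all [torusAct]
    all_goals exact Or.inl (by field_simp)
  · refine ⟨t, (t ^ 2)⁻¹, ht, by simpa, ?_⟩
    ext j <;> fin_cases j <;> simp_all [torusAct]
    all_goals exact Or.inl (by field_simp)

noncomputable def torusInvariant (q : (Fin 3 → ℂ) × (Fin 3 → ℂ)) : ℝ :=
  ∏ i, (‖q.1 i‖ ^ 2 + ‖q.2 i‖ ^ 3)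

theorem continuous_torusInvariant : Continuous torusInvariant := by
  unfold torusInvariant
  fun_prop

theorem torusInvariant_torusAct (v w : Fin 3 → ℂ) {l1 l2 : ℂ} (h1 : l1 ≠ 0) (h2 : l2 ≠ 0) :
    torusInvariant (torusAct l1 l2 v w) = torusInvariant (v, w) := by
  have n1 : ‖l1‖ ≠ 0 := norm_ne_zero_iff.mpr h1
  have n2 : ‖l2‖ ≠ 0 := norm_ne_zero_iff.mpr h2
  simp only [torusInvariant, torusAct, Fin.prod_univ_three, Matrix.cons_val_zero,
    Matrix.cons_val_one, Matrix.cons_val_two, Matrix.tail_cons, Matrix.head_cons,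
    norm_mul, norm_pow, norm_inv]
  field_simp

theorem torusInvariant_eq_zero_iff (q : (Fin 3 → ℂ) × (Fin 3 → ℂ)) :
    torusInvariant q = 0 ↔ ∃ i, q.1 i = 0 ∧ q.2 i = 0 := by
  simp [torusInvariant, Finset.prod_eq_zero_iff, add_eq_zero_iff_of_nonneg]

theorem torusInvariant_eq_zero_of_zero_mem_closure {v w : Fin 3 → ℂ}
    (h : 0 ∈ closure (torusOrbit v w)) : torusInvariant (v, w) = 0 := by
  have hconst : Set.MapsTo torusInvariant (torusOrbit v w) {torusInvariant (v, w)} := by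
    rintro _ ⟨l1, l2, h1, h2, rfl⟩
    exact torusInvariant_torusAct v w h1 h2
  have := map_mem_closure continuous_torusInvariant h hconst
  rw [closure_singleton, Set.mem_singleton_iff] at this
  rw [← this, torusInvariant_eq_zero_iff]
  exact ⟨0, rfl, rfl⟩

theorem zero_mem_closure_torusOrbit_iff (v w : Fin 3 → ℂ) :
    0 ∈ closure (torusOrbit v w) ↔ ∃ i, v i = 0 ∧ w i = 0 := by
  refine ⟨fun h => ?_, fun ⟨i, hv, hw⟩ => ?_⟩
  · exact (torusInvariant_eq_zero_iff (v, w)).1 (torusInvariant_eq_zero_of_zero_mem_closure h)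
  · exact zero_mem_closure_torusOrbit_of_weighted_scaling fun t ht =>
      weighted_scaling_mem_torusOrbit hv hw ht

/-- The unstable locus of the torus action on the exceptional divisor of the Kirwan
blowup of the Luna slice at the 3A₂ cubic: the origin lies in the closure of the
(ℂˣ)²-orbit of (v,w) if and only if (vᵢ,wᵢ) = (0,0) for some i ∈ {0,1,2}. -/
theorem unstable_locus_kirwan_blowup (v w : Fin 3 → ℂ) :
    (0 : (Fin 3 → ℂ) × (Fin 3 → ℂ)) ∈
        closure {q : (Fin 3 → ℂ) × (Fin 3 → ℂ) |
          ∃ l1 l2 : ℂ, l1 ≠ 0 ∧ l2 ≠ 0 ∧ q = torusAct l1 l2 v w} ↔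
      (v 0 = 0 ∧ w 0 = 0) ∨ (v 1 = 0 ∧ w 1 = 0) ∨ (v 2 = 0 ∧ w 2 = 0) := by
  refine (zero_mem_closure_torusOrbit_iff v w).trans ?_
  simp [Fin.exists_fin_succ]
end

section
/- The polyhedron P_a = {(a,b,c) ∈ ℝ³ : c ≥ 2, −2a + c ≥ 2, −16a − 6b + c ≥ 2, −3a − b − c ≥ −3, −b − c ≥ −3, 21a + 8b − c ≥ −3} is a polytope equal to the convex hull of the eight points (−3/8, 1, 2), (0, 1/7, 20/7), (3/8, −7/8, 11/4), (0, 0, 2), (3/7, −8/7, 20/7), (0, −1/8, 2), (0, 0, 3), (−3/7, 1, 2). (This polytope is a combinatorial cube; it is the polytope of the toric threefold X_{P_a} whose quotient by S₃ is the exceptional divisor D_{3A₂} of the Kirwan blowup.) -/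
/-!
The six inequalities define an intersection of half-spaces, which is convex and contains the
eight points, so it contains their convex hull.

Conversely, the vertex `o = (0, 0, 2)` lies on the first three facets, so the polytope is the union
of the cones from `o` over the other three facets, each a quadrilateral. Cutting each quadrilateral
into two triangles covers the polytope by six tetrahedra with apex `o`; the plane `p 0 = 0` and a
few planes through `o` decide which tetrahedron contains a given point. The barycentric coordinates
of the point in its tetrahedron are affine in the point, the one of `o` being the slack of the
facet's inequality.
-/

theorem mem_convexHull_of_affine_coords {E : Type*} [AddCommGroup E] [Module ℝ E]
    {s : Set E} {o v₁ v₂ v₃ p : E} {w₁ w₂ w₃ : ℝ} (hv : {o, v₁, v₂, v₃} ⊆ s)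
    (h₁ : 0 ≤ w₁) (h₂ : 0 ≤ w₂) (h₃ : 0 ≤ w₃) (hsum : w₁ + w₂ + w₃ ≤ 1)
    (hp : p = o + w₁ • (v₁ - o) + w₂ • (v₂ - o) + w₃ • (v₃ - o)) :
    p ∈ convexHull ℝ s := by
  simp only [Set.insert_subset_iff, Set.singleton_subset_iff] at hv
  have hmem := (convex_convexHull ℝ s).sum_mem (t := Finset.univ)
    (w := ![1 - w₁ - w₂ - w₃, w₁, w₂, w₃]) (z := ![o, v₁, v₂, v₃])
    (by intro i _; fin_cases i <;> simp <;> linarith)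
    (by
      simp only [Fin.sum_univ_four, Matrix.cons_val_zero, Matrix.cons_val_one, Matrix.cons_val]
      ring)
    (by intro i _; fin_cases i <;> exact subset_convexHull ℝ s (by simp [hv]))
  convert hmem using 1
  simp only [hp, Fin.sum_univ_four, Matrix.cons_val_zero, Matrix.cons_val_one, Matrix.cons_val,
    smul_sub, sub_smul, one_smul]
  abel

def kirwanPolytope : Set (Fin 3 → ℝ) :=
  {p | p 2 ≥ 2 ∧ -2 * p 0 + p 2 ≥ 2 ∧ -16 * p 0 - 6 * p 1 + p 2 ≥ 2 ∧
    -3 * p 0 - p 1 - p 2 ≥ -3 ∧ -p 1 - p 2 ≥ -3 ∧ 21 * p 0 + 8 * p 1 - p 2 ≥ -3}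

def kirwanVertices : Set (Fin 3 → ℝ) :=
  {![-3/8, 1, 2], ![0, 1/7, 20/7], ![3/8, -7/8, 11/4], ![0, 0, 2],
    ![3/7, -8/7, 20/7], ![0, -1/8, 2], ![0, 0, 3], ![-3/7, 1, 2]}

theorem convex_kirwanPolytope : Convex ℝ kirwanPolytope := by
  simp only [kirwanPolytope, Set.ofPred_and]
  refine (convex_halfSpace_ge ?_ _).inter <| (convex_halfSpace_ge ?_ _).inter <|
    (convex_halfSpace_ge ?_ _).inter <| (convex_halfSpace_ge ?_ _).inter <|
    (convex_halfSpace_ge ?_ _).inter <| convex_halfSpace_ge ?_ _ <;>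
    constructor <;> intros <;> simp only [Pi.add_apply, Pi.smul_apply, smul_eq_mul] <;> ring

theorem kirwanVertices_subset_kirwanPolytope : kirwanVertices ⊆ kirwanPolytope := by
  simp only [kirwanVertices, Set.insert_subset_iff, Set.singleton_subset_iff]
  norm_num [kirwanPolytope, Matrix.cons_val_two, Matrix.tail_cons, Matrix.head_cons]

theorem mem_convexHull_kirwanVertices_of_nonneg {p : Fin 3 → ℝ} (hp : p ∈ kirwanPolytope)
    (ha : 0 ≤ p 0) : p ∈ convexHull ℝ kirwanVertices := by
  obtain ⟨h₁, h₂, h₃, h₄, h₅, h₆⟩ := hp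
  rcases le_total (-2) (18 * p 0 + 6 * p 1 - p 2) with hs | hs
  · refine mem_convexHull_of_affine_coords (o := ![0, 0, 2]) (v₁ := ![0, 1/7, 20/7])
      (v₂ := ![3/8, -7/8, 11/4]) (v₃ := ![3/7, -8/7, 20/7])
      (w₁ := -7/3 * p 0 + 7/6 * p 2 - 7/3) (w₂ := 24 * p 0 + 8 * p 1 - 4/3 * p 2 + 8/3)
      (w₃ := -56/3 * p 0 - 7 * p 1 + 7/6 * p 2 - 7/3)
      (by simp [kirwanVertices, Set.insert_subset_iff])
      (by linarith) (by linarith) (by linarith) (by linarith)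
      (by ext i; fin_cases i <;> simp <;> ring)
  rcases le_total 0 (8 * p 0 + 3 * p 1) with hb | hb
  · refine mem_convexHull_of_affine_coords (o := ![0, 0, 2]) (v₁ := ![0, 1/7, 20/7])
      (v₂ := ![3/7, -8/7, 20/7]) (v₃ := ![0, 0, 3])
      (w₁ := 56/3 * p 0 + 7 * p 1) (w₂ := 7/3 * p 0) (w₃ := -18 * p 0 - 6 * p 1 + p 2 - 2)
      (by simp [kirwanVertices, Set.insert_subset_iff])
      (by linarith) (by linarith) (by linarith) (by linarith)
      (by ext i; fin_cases i <;> simp <;> ring)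
  · refine mem_convexHull_of_affine_coords (o := ![0, 0, 2]) (v₁ := ![0, -1/8, 2])
      (v₂ := ![3/7, -8/7, 20/7]) (v₃ := ![0, 0, 3])
      (w₁ := -64/3 * p 0 - 8 * p 1) (w₂ := 7/3 * p 0) (w₃ := -2 * p 0 + p 2 - 2)
      (by simp [kirwanVertices, Set.insert_subset_iff])
      (by linarith) (by linarith) (by linarith) (by linarith)
      (by ext i; fin_cases i <;> simp <;> ring)

theorem mem_convexHull_kirwanVertices_of_nonpos {p : Fin 3 → ℝ} (hp : p ∈ kirwanPolytope)
    (ha : p 0 ≤ 0) : p ∈ convexHull ℝ kirwanVertices := by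
  obtain ⟨h₁, h₂, h₃, h₄, h₅, h₆⟩ := hp
  rcases le_total 0 (7 * p 0 + 3 * p 1) with hc | hc
  · rcases le_total 0 (8 * p 0 + 3 * p 1) with hb | hb
    · refine mem_convexHull_of_affine_coords (o := ![0, 0, 2]) (v₁ := ![-3/8, 1, 2])
        (v₂ := ![0, 1/7, 20/7]) (v₃ := ![0, 0, 3])
        (w₁ := -8/3 * p 0) (w₂ := 56/3 * p 0 + 7 * p 1) (w₃ := -16 * p 0 - 6 * p 1 + p 2 - 2)
        (by simp [kirwanVertices, Set.insert_subset_iff])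
        (by linarith) (by linarith) (by linarith) (by linarith)
        (by ext i; fin_cases i <;> simp <;> ring)
    · refine mem_convexHull_of_affine_coords (o := ![0, 0, 2]) (v₁ := ![-3/8, 1, 2])
        (v₂ := ![0, 0, 3]) (v₃ := ![-3/7, 1, 2])
        (w₁ := 56/3 * p 0 + 8 * p 1) (w₂ := p 2 - 2) (w₃ := -56/3 * p 0 - 7 * p 1)
        (by simp [kirwanVertices, Set.insert_subset_iff])
        (by linarith) (by linarith) (by linarith) (by linarith)
        (by ext i; fin_cases i <;> simp <;> ring)
  · refine mem_convexHull_of_affine_coords (o := ![0, 0, 2]) (v₁ := ![0, -1/8, 2])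
      (v₂ := ![0, 0, 3]) (v₃ := ![-3/7, 1, 2])
      (w₁ := -56/3 * p 0 - 8 * p 1) (w₂ := p 2 - 2) (w₃ := -7/3 * p 0)
      (by simp [kirwanVertices, Set.insert_subset_iff])
      (by linarith) (by linarith) (by linarith) (by linarith)
      (by ext i; fin_cases i <;> simp <;> ring)

/-- The polyhedron P_a ⊂ ℝ³ of the toric threefold X_{P_a} (whose quotient by S₃ is
the exceptional divisor D_{3A₂} of the Kirwan blowup) is the convex hull of the eight
listed vertices; in particular it is a polytope (a combinatorial cube). -/
theorem kirwan_toric_polytope :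
    {p : Fin 3 → ℝ |
        p 2 ≥ 2 ∧
        -2 * p 0 + p 2 ≥ 2 ∧
        -16 * p 0 - 6 * p 1 + p 2 ≥ 2 ∧
        -3 * p 0 - p 1 - p 2 ≥ -3 ∧
        -p 1 - p 2 ≥ -3 ∧
        21 * p 0 + 8 * p 1 - p 2 ≥ -3} =
      convexHull ℝ
        ({![-3/8, 1, 2], ![0, 1/7, 20/7], ![3/8, -7/8, 11/4], ![0, 0, 2],
          ![3/7, -8/7, 20/7], ![0, -1/8, 2], ![0, 0, 3], ![-3/7, 1, 2]} :
          Set (Fin 3 → ℝ)) := by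
  change kirwanPolytope = convexHull ℝ kirwanVertices
  refine subset_antisymm (fun p hp => ?_)
    (convexHull_min kirwanVertices_subset_kirwanPolytope convex_kirwanPolytope)
  rcases le_total 0 (p 0) with ha | ha
  · exact mem_convexHull_kirwanVertices_of_nonneg hp ha
  · exact mem_convexHull_kirwanVertices_of_nonpos hp ha
end
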